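/- Let A be a commutative ring, I ⊆ A an ideal, and f : A → B a flat ring homomorphism. Then the natural map (Iⁿ/Iⁿ⁺¹) ⊗_A B → (IB)ⁿ/(IB)ⁿ⁺¹ is an isomorphism for every n ≥ 0; consequently the associated graded ring of B with respect to IB is the base change gr_I(A) ⊗_A B. -/

import Mathlib

/-!
Over a flat `A`-algebra `B`, the multiplication map `B ⊗[A] J → B` is injective for every
ideal `J` of `A`, and its image is the extended ideal `JB`. Tensoring the exact sequence
`0 → Iⁿ⁺¹ → Iⁿ → Iⁿ/Iⁿ⁺¹ → 0` with `B` therefore identifies `B ⊗[A] Iⁿ/Iⁿ⁺¹` with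
`IⁿB/Iⁿ⁺¹B = (IB)ⁿ/(IB)ⁿ⁺¹`.
-/

open TensorProduct

noncomputable section

/-- The subquotient Iⁿ/Iⁿ⁺¹ as an A-module. -/
abbrev powQuot {A : Type*} [CommRing A] (I : Ideal A) (n : ℕ) : Type _ :=
  ↥(I ^ n) ⧸ (Submodule.comap (I ^ n : Ideal A).subtype (I ^ (n + 1) : Ideal A))

/-- The subquotient Jⁿ/Jⁿ⁺¹ of an ideal of an A-algebra B, as an A-module. -/
abbrev powQuotRS (A : Type*) {B : Type*} [CommRing A] [CommRing B] [Algebra A B]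
    (J : Ideal B) (n : ℕ) : Type _ :=
  ↥(Submodule.restrictScalars A (J ^ n : Ideal B)) ⧸
    (Submodule.comap (Submodule.restrictScalars A (J ^ n : Ideal B)).subtype
      (Submodule.restrictScalars A (J ^ (n + 1) : Ideal B)))

lemma mem_restrict_pow_of_mem_pow {A B : Type*} [CommRing A] [CommRing B]
    [Algebra A B] (I : Ideal A) (n : ℕ) (x : A) (hx : x ∈ I ^ n) (b : B) :
    algebraMap A B x * b
      ∈ Submodule.restrictScalars A ((I.map (algebraMap A B)) ^ n : Ideal B) := by
  have h1 : algebraMap A B x ∈ (I.map (algebraMap A B)) ^ n := by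
    rw [← Ideal.map_pow]
    exact Ideal.mem_map_of_mem _ hx
  simpa using Ideal.mul_mem_right b _ h1

section liftBaseChange

variable {R A M N P : Type*} [CommSemiring R] [CommSemiring A] [Algebra R A]
  [AddCommMonoid M] [Module R M] [AddCommMonoid N] [Module R N] [Module A N]
  [IsScalarTower R A N] [AddCommMonoid P] [Module R P]

lemma LinearMap.liftBaseChange_comp_lTensor (l : M →ₗ[R] N) (q : P →ₗ[R] M) :
    (l.liftBaseChange A).restrictScalars R ∘ₗ q.lTensor A =
      ((l ∘ₗ q).liftBaseChange A).restrictScalars R := by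
  ext; simp

end liftBaseChange

section algebraLinearMap

variable {A B M : Type*} [CommSemiring A] [CommSemiring B] [Algebra A B] [AddCommMonoid M]
  [Module A M]

lemma LinearMap.range_liftBaseChange_algebraLinearMap_comp (p : M →ₗ[A] A) :
    LinearMap.range ((Algebra.linearMap A B ∘ₗ p).liftBaseChange B) =
      Ideal.map (algebraMap A B) (LinearMap.range p) := by
  rw [LinearMap.range_liftBaseChange, LinearMap.range_comp, Ideal.map, Submodule.map_coe]
  rfl

lemma LinearMap.liftBaseChange_algebraLinearMap_eq_rid :
    ((Algebra.linearMap A B).liftBaseChange B).restrictScalars A =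
      (TensorProduct.rid A B).toLinearMap := by
  ext; simp [Algebra.smul_def, mul_comm]

lemma LinearMap.liftBaseChange_algebraLinearMap_comp_injective [Module.Flat A B]
    {p : M →ₗ[A] A} (hp : Function.Injective p) :
    Function.Injective ((Algebra.linearMap A B ∘ₗ p).liftBaseChange B) := by
  have h := congrArg DFunLike.coe
    (LinearMap.liftBaseChange_comp_lTensor (A := B) (Algebra.linearMap A B) p)
  rw [LinearMap.liftBaseChange_algebraLinearMap_eq_rid] at h
  change Function.Injective (((Algebra.linearMap A B ∘ₗ p).liftBaseChange B).restrictScalars A)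
  rw [← h]
  exact (TensorProduct.rid A B).injective.comp
    (Module.Flat.lTensor_preserves_injective_linearMap p hp)

end algebraLinearMap

namespace Ideal

variable {A B : Type*} [CommRing A] [CommRing B] [Algebra A B] [Module.Flat A B]

/- The extended ideals are given up to equality, so that they can be `(IB)ⁿ` rather than
`IⁿB`. -/
def tensorEquivMap (L : Ideal A) {L' : Ideal B} (hL : L.map (algebraMap A B) = L') :
    B ⊗[A] L ≃ₗ[A] L'.restrictScalars A :=
  LinearEquiv.ofInjective
      (((Algebra.linearMap A B ∘ₗ L.subtype).liftBaseChange B).restrictScalars A)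
      (LinearMap.liftBaseChange_algebraLinearMap_comp_injective L.injective_subtype) ≪≫ₗ
    LinearEquiv.ofEq _ _ (by
      rw [LinearMap.range_restrictScalars,
        LinearMap.range_liftBaseChange_algebraLinearMap_comp, Submodule.range_subtype, hL])

lemma map_tensorEquivMap_range_lTensor {K L : Ideal A} (hKL : K ≤ L) {K' L' : Ideal B}
    (hK : K.map (algebraMap A B) = K') (hL : L.map (algebraMap A B) = L') :
    (LinearMap.range ((Submodule.comap L.subtype K).subtype.lTensor B)).map
        (tensorEquivMap L hL).toLinearMap =
      Submodule.comap (L'.restrictScalars A).subtype (K'.restrictScalars A) := by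
  apply Submodule.map_injective_of_injective (L'.restrictScalars A).injective_subtype
  have hK'L' : K' ≤ L' := hK ▸ hL ▸ Ideal.map_mono hKL
  rw [Submodule.map_comap_subtype,
    inf_eq_right.mpr (show K'.restrictScalars A ≤ L'.restrictScalars A from hK'L'),
    ← Submodule.map_comp, ← LinearMap.range_comp]
  have he : (L'.restrictScalars A).subtype ∘ₗ (tensorEquivMap L hL).toLinearMap =
      ((Algebra.linearMap A B ∘ₗ L.subtype).liftBaseChange B).restrictScalars A := rfl
  rw [he, LinearMap.liftBaseChange_comp_lTensor, LinearMap.range_restrictScalars,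
    LinearMap.comp_assoc, LinearMap.range_liftBaseChange_algebraLinearMap_comp,
    LinearMap.range_comp, Submodule.range_subtype, Submodule.map_comap_subtype,
    inf_eq_right.mpr hKL, hK]

def tensorSubquotientEquiv {K L : Ideal A} (hKL : K ≤ L) {K' L' : Ideal B}
    (hK : K.map (algebraMap A B) = K') (hL : L.map (algebraMap A B) = L') :
    B ⊗[A] (L ⧸ Submodule.comap L.subtype K) ≃ₗ[A]
      L'.restrictScalars A ⧸
        Submodule.comap (L'.restrictScalars A).subtype (K'.restrictScalars A) :=
  tensorQuotientEquiv B _ ≪≫ₗ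
    Submodule.Quotient.equiv _ _ (tensorEquivMap L hL) (map_tensorEquivMap_range_lTensor hKL hK hL)

lemma tensorSubquotientEquiv_tmul_mk {K L : Ideal A} (hKL : K ≤ L) {K' L' : Ideal B}
    (hK : K.map (algebraMap A B) = K') (hL : L.map (algebraMap A B) = L') (b : B) (x : L)
    (hx : algebraMap A B x * b ∈ L'.restrictScalars A) :
    tensorSubquotientEquiv hKL hK hL (b ⊗ₜ Submodule.Quotient.mk x) =
      Submodule.Quotient.mk ⟨algebraMap A B x * b, hx⟩ :=
  congrArg Submodule.Quotient.mk (Subtype.ext (mul_comm _ _))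

end Ideal

/-- if B is a flat A-algebra and I ⊆ A is an ideal, then the natural
map (Iⁿ/Iⁿ⁺¹) ⊗_A B → (IB)ⁿ/(IB)ⁿ⁺¹, x ⊗ b ↦ class of (image of x)·b, is an
isomorphism for every n ≥ 0; consequently the associated graded ring of B with
respect to IB is the base change gr_I(A) ⊗_A B. -/
theorem stmt_15 {A B : Type*} [CommRing A] [CommRing B] [Algebra A B]
    [Module.Flat A B] (I : Ideal A) (n : ℕ) :
    ∃ e : ((powQuot I n) ⊗[A] B) ≃ₗ[A] powQuotRS A (I.map (algebraMap A B)) n,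
      ∀ (x : A) (hx : x ∈ I ^ n) (b : B),
        e ((Submodule.Quotient.mk ⟨x, hx⟩) ⊗ₜ[A] b) =
          Submodule.Quotient.mk
            ⟨algebraMap A B x * b, mem_restrict_pow_of_mem_pow I n x hx b⟩ := by
  refine ⟨TensorProduct.comm A _ B ≪≫ₗ Ideal.tensorSubquotientEquiv
    (Ideal.pow_le_pow_right n.le_succ) (Ideal.map_pow _ I _) (Ideal.map_pow _ I n),
    fun x hx b => ?_⟩
  rw [LinearEquiv.trans_apply, TensorProduct.comm_tmul, Ideal.tensorSubquotientEquiv_tmul_mk]
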